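/- arXiv:2603.07154 — 6 statements merged into one kernel-verified Lean document; each statement's English description precedes it below -/
import Mathlib

section
/- Suppose complex numbers $p_0,q_0,r_0,f_0,g_0,h_0$ and constants $A,B,C$ satisfy the last three equations of (3) (i.e. $-2f_0 = r_0 g_0 - q_0 h_0$, etc.), together with $Ap_0f_0 + Bq_0g_0 + Cr_0h_0 = 0$ and $x_0 f_0 + y_0 g_0 + z_0 h_0 = \tfrac12(Ap_0^2+Bq_0^2+Cr_0^2)$, and the first three equations of (3): $-Ap_0 = (B-C)q_0r_0 + y_0h_0 - z_0g_0$ (and its two cyclic analogues with coefficients $(C-A)$, $(A-B)$ and $x_0,y_0,z_0$). Then $A^2p_0^2 + B^2q_0^2 + C^2r_0^2 = -\tfrac14 (Ap_0^2 + Bq_0^2 + Cr_0^2)^2$. -/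
theorem stmt_2 (A B C x₀ y₀ z₀ p₀ q₀ r₀ f₀ g₀ h₀ : ℂ)
    (h1 : -2 * f₀ = r₀ * g₀ - q₀ * h₀)
    (h2 : -2 * g₀ = p₀ * h₀ - r₀ * f₀)
    (h3 : -2 * h₀ = q₀ * f₀ - p₀ * g₀)
    (h4 : A * p₀ * f₀ + B * q₀ * g₀ + C * r₀ * h₀ = 0)
    (h5 : x₀ * f₀ + y₀ * g₀ + z₀ * h₀
        = (1 / 2) * (A * p₀ ^ 2 + B * q₀ ^ 2 + C * r₀ ^ 2))
    (e1 : -(A * p₀) = (B - C) * q₀ * r₀ + y₀ * h₀ - z₀ * g₀)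
    (e2 : -(B * q₀) = (C - A) * r₀ * p₀ + z₀ * f₀ - x₀ * h₀)
    (e3 : -(C * r₀) = (A - B) * p₀ * q₀ + x₀ * g₀ - y₀ * f₀) :
    A ^ 2 * p₀ ^ 2 + B ^ 2 * q₀ ^ 2 + C ^ 2 * r₀ ^ 2
      = -(1 / 4) * (A * p₀ ^ 2 + B * q₀ ^ 2 + C * r₀ ^ 2) ^ 2 := by
  have hRF : p₀ * f₀ + q₀ * g₀ + r₀ * h₀ = 0 := by
    linear_combination (-(1:ℂ)/2) * (p₀ * h1 + q₀ * h2 + r₀ * h3)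
  have hFF : f₀ ^ 2 + g₀ ^ 2 + h₀ ^ 2 = 0 := by
    linear_combination (-(1:ℂ)/2) * (f₀ * h1 + g₀ * h2 + h₀ * h3)
  by_cases hc : p₀ ^ 2 + q₀ ^ 2 + r₀ ^ 2 + 4 = 0
  · linear_combination ((1:ℂ)/3) * ((A*p₀)*e1 + (B*q₀)*e2 + (C*r₀)*e3)
      - ((1:ℂ)/3) * ((y₀*h₀ - z₀*g₀)*e1 + (z₀*f₀ - x₀*h₀)*e2 + (x₀*g₀ - y₀*f₀)*e3)
      + ((1:ℂ)/3) * (((B-C)*q₀*r₀)*e1 + ((C-A)*r₀*p₀)*e2 + ((A-B)*p₀*q₀)*e3)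
      + ((1:ℂ)/3) * (x₀*f₀ + y₀*g₀ + z₀*h₀ + (1/2)*(A*p₀^2 + B*q₀^2 + C*r₀^2)) * h5
      - ((1:ℂ)/3) * (x₀^2 + y₀^2 + z₀^2) * hFF
      + ((1:ℂ)/3) * (A^2*p₀^2 + B^2*q₀^2 + C^2*r₀^2) * hc
  · have hkf : (p₀ ^ 2 + q₀ ^ 2 + r₀ ^ 2 + 4) * f₀ = 0 := by
      linear_combination p₀ * hRF - 2 * h1 - q₀ * h3 + r₀ * h2
    have hkg : (p₀ ^ 2 + q₀ ^ 2 + r₀ ^ 2 + 4) * g₀ = 0 := by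
      linear_combination q₀ * hRF - 2 * h2 - r₀ * h1 + p₀ * h3
    have hkh : (p₀ ^ 2 + q₀ ^ 2 + r₀ ^ 2 + 4) * h₀ = 0 := by
      linear_combination r₀ * hRF - 2 * h3 - p₀ * h2 + q₀ * h1
    have hf : f₀ = 0 := (mul_eq_zero.mp hkf).resolve_left hc
    have hg : g₀ = 0 := (mul_eq_zero.mp hkg).resolve_left hc
    have hh : h₀ = 0 := (mul_eq_zero.mp hkh).resolve_left hc
    subst hf hg hh
    linear_combination -((A*p₀)*e1 + (B*q₀)*e2 + (C*r₀)*e3)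
      - ((1:ℂ)/2) * (A*p₀^2 + B*q₀^2 + C*r₀^2) * h5
end

section
/- Let $p,q,r,\gamma,\gamma',\gamma''$ be differentiable real (or complex) functions of $t$ satisfying the Kovalevskaya system: $2p' = qr$, $2q' = -pr - c_0\gamma''$, $r' = c_0\gamma'$, $d\gamma/dt = r\gamma' - q\gamma''$, $d\gamma'/dt = p\gamma'' - r\gamma$, $d\gamma''/dt = q\gamma - p\gamma'$. Then the function $t \mapsto \big((p+qi)^2 + c_0(\gamma+i\gamma')\big)\big((p-qi)^2 + c_0(\gamma-i\gamma')\big)$ has zero derivative, i.e. is constant. -/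
open Complex

theorem stmt_5 (c₀ : ℂ) (p q r γ γ' γ'' : ℝ → ℂ)
    (hp : ∀ t, HasDerivAt p (q t * r t / 2) t)
    (hq : ∀ t, HasDerivAt q ((-(p t * r t) - c₀ * γ'' t) / 2) t)
    (hr : ∀ t, HasDerivAt r (c₀ * γ' t) t)
    (hγ : ∀ t, HasDerivAt γ (r t * γ' t - q t * γ'' t) t)
    (hγ' : ∀ t, HasDerivAt γ' (p t * γ'' t - r t * γ t) t)
    (hγ'' : ∀ t, HasDerivAt γ'' (q t * γ t - p t * γ' t) t) :
    ∀ t : ℝ, HasDerivAt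
      (fun t => ((p t + q t * I) ^ 2 + c₀ * (γ t + I * γ' t)) *
                ((p t - q t * I) ^ 2 + c₀ * (γ t - I * γ' t))) 0 t := by
  intro t
  have ha := (hp t).add ((hq t).mul_const I)
  have hb := (hp t).sub ((hq t).mul_const I)
  have h1 : HasDerivAt (fun t => (p t + q t * I) ^ 2 + c₀ * (γ t + I * γ' t))
      ((q t * r t / 2 + (-(p t * r t) - c₀ * γ'' t) / 2 * I) * (p t + q t * I) +
        (p t + q t * I) * (q t * r t / 2 + (-(p t * r t) - c₀ * γ'' t) / 2 * I) +
        c₀ * ((r t * γ' t - q t * γ'' t) + I * (p t * γ'' t - r t * γ t))) t := by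
    simp only [pow_two]; exact (ha.mul ha).add (((hγ t).add ((hγ' t).const_mul I)).const_mul c₀)
  have h2 : HasDerivAt (fun t => (p t - q t * I) ^ 2 + c₀ * (γ t - I * γ' t))
      ((q t * r t / 2 - (-(p t * r t) - c₀ * γ'' t) / 2 * I) * (p t - q t * I) +
        (p t - q t * I) * (q t * r t / 2 - (-(p t * r t) - c₀ * γ'' t) / 2 * I) +
        c₀ * ((r t * γ' t - q t * γ'' t) - I * (p t * γ'' t - r t * γ t))) t := by
    simp only [pow_two]; exact (hb.mul hb).add (((hγ t).sub ((hγ' t).const_mul I)).const_mul c₀)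
  have h := h1.mul h2
  refine h.congr_deriv (Eq.symm ?_)
  linear_combination (-(2 * (q t * r t * p t * c₀ * γ t + q t * r t * p t ^ 3
    - q t * p t ^ 2 * c₀ * γ'' t - q t * c₀ ^ 2 * γ t * γ'' t - q t ^ 3 * r t * p t
    - q t ^ 3 * c₀ * γ'' t + r t * p t ^ 2 * c₀ * γ' t + r t * c₀ ^ 2 * γ t * γ' t)))
    * Complex.I_sq
    + (2 * (q t ^ 3 * r t * p t + q t ^ 3 * c₀ * γ'' t) * (I ^ 2 - 1)) * Complex.I_sq
end

section
/- Let $p,q,r,\gamma,\gamma',\gamma''$ satisfy the Kovalevskaya differential system of §2. Setting $x_1 = p+qi$, $y_1 = \gamma + \gamma'i$, then $2i\,dx_1/dt = r x_1 + c_0 \gamma''$ and $d/dt\big(x_1^2 + c_0 y_1\big) = -ri\big(x_1^2 + c_0 y_1\big)$. -/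
/-! Since `2 i ẋ₁ = r x₁ + c₀ γ''`, we get `d(x₁²)/dt = -i x₁ (r x₁ + c₀ γ'')`, while the
equations for `γ, γ'` give `ẏ₁ = -i r y₁ + i γ'' x₁`: the `γ''` terms cancel in
`d(x₁² + c₀ y₁)/dt`. -/

open Complex

theorem hasDerivAt_add_mul_I {f g : ℝ → ℂ} {f' g' : ℂ} {t : ℝ}
    (hf : HasDerivAt f f' t) (hg : HasDerivAt g g' t) :
    HasDerivAt (fun t => f t + g t * I) (f' + g' * I) t :=
  hf.add (hg.mul_const I)

section Kovalevskaya

variable {c₀ : ℂ} {p q r γ γ' γ'' : ℝ → ℂ} {t : ℝ}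

theorem kovalevskaya_hasDerivAt_x
    (hp : HasDerivAt p (q t * r t / 2) t)
    (hq : HasDerivAt q ((-(p t * r t) - c₀ * γ'' t) / 2) t) :
    HasDerivAt (fun t => p t + q t * I)
      ((r t * (p t + q t * I) + c₀ * γ'' t) / (2 * I)) t := by
  refine (hasDerivAt_add_mul_I hp hq).congr_deriv ?_
  field_simp
  linear_combination (-(r t * p t) - c₀ * γ'' t) * I_sq

theorem kovalevskaya_hasDerivAt_x_sq_add_y
    (hx : HasDerivAt (fun t => p t + q t * I)
      ((r t * (p t + q t * I) + c₀ * γ'' t) / (2 * I)) t)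
    (hγ : HasDerivAt γ (r t * γ' t - q t * γ'' t) t)
    (hγ' : HasDerivAt γ' (p t * γ'' t - r t * γ t) t) :
    HasDerivAt (fun t => (p t + q t * I) ^ 2 + c₀ * (γ t + γ' t * I))
      (-(r t) * I * ((p t + q t * I) ^ 2 + c₀ * (γ t + γ' t * I))) t := by
  refine ((hx.pow 2).add ((hasDerivAt_add_mul_I hγ hγ').const_mul c₀)).congr_deriv ?_
  field_simp
  linear_combination (4 * I * p t * q t * r t + 2 * p t * c₀ * γ'' t + 2 * p t ^ 2 * r t
    + 2 * I ^ 2 * q t ^ 2 * r t + 2 * I * r t * c₀ * γ' t) * I_sq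

end Kovalevskaya

theorem stmt_7_general (c₀ : ℂ) (p q r γ γ' γ'' : ℝ → ℂ)
    (hp : ∀ t, HasDerivAt p (q t * r t / 2) t)
    (hq : ∀ t, HasDerivAt q ((-(p t * r t) - c₀ * γ'' t) / 2) t)
    (hγ : ∀ t, HasDerivAt γ (r t * γ' t - q t * γ'' t) t)
    (hγ' : ∀ t, HasDerivAt γ' (p t * γ'' t - r t * γ t) t) :
    ∀ t : ℝ,
      HasDerivAt (fun t => p t + q t * I)
        ((r t * (p t + q t * I) + c₀ * γ'' t) / (2 * I)) t ∧
      HasDerivAt (fun t => (p t + q t * I) ^ 2 + c₀ * (γ t + γ' t * I))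
        (-(r t) * I * ((p t + q t * I) ^ 2 + c₀ * (γ t + γ' t * I))) t := by
  intro t
  have hx := kovalevskaya_hasDerivAt_x (hp t) (hq t)
  exact ⟨hx, kovalevskaya_hasDerivAt_x_sq_add_y hx (hγ t) (hγ' t)⟩

theorem stmt_7 (c₀ : ℂ) (p q r γ γ' γ'' : ℝ → ℂ)
    (hp : ∀ t, HasDerivAt p (q t * r t / 2) t)
    (hq : ∀ t, HasDerivAt q ((-(p t * r t) - c₀ * γ'' t) / 2) t)
    (hr : ∀ t, HasDerivAt r (c₀ * γ' t) t)
    (hγ : ∀ t, HasDerivAt γ (r t * γ' t - q t * γ'' t) t)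
    (hγ' : ∀ t, HasDerivAt γ' (p t * γ'' t - r t * γ t) t)
    (hγ'' : ∀ t, HasDerivAt γ'' (q t * γ t - p t * γ' t) t) :
    ∀ t : ℝ,
      HasDerivAt (fun t => p t + q t * I)
        ((r t * (p t + q t * I) + c₀ * γ'' t) / (2 * I)) t ∧
      HasDerivAt (fun t => (p t + q t * I) ^ 2 + c₀ * (γ t + γ' t * I))
        (-(r t) * I * ((p t + q t * I) ^ 2 + c₀ * (γ t + γ' t * I))) t :=
  stmt_7_general c₀ p q r γ γ' γ'' hp hq hγ hγ'
end

section
/- With $s_1, s_2$ defined from $x_1, x_2$ as in equations (9) of §2, $k_1 = (l_1+k)/2$, $k_2 = (l_1-k)/2$, one has the identity $s_2 - s_1 = \frac{\sqrt{R(x_1)}\sqrt{R(x_2)}}{(x_1-x_2)^2}$, and consequently $W^2 = 16(x_1-x_2)^4(s_1-k_1)(s_2-k_1)(s_1-k_2)(s_2-k_2)$ where $W^2 = \{R_1(x_1x_2)+k^2(x_1-x_2)^2\}^2 - 4k^2R(x_1)R(x_2)$. -/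
private lemma stmt_12_aux (y a b c d : ℂ) (hy : y ≠ 0) :
    16 * y ^ 2 * (a / (2 * y)) * (b / (2 * y)) * (c / (2 * y)) * (d / (2 * y)) =
    a * b * c * d / y ^ 2 := by
  have h2y : (2 * y) ≠ 0 := by simpa using hy
  rw [eq_div_iff (pow_ne_zero 2 hy)]
  field_simp
  ring

theorem stmt_12 (l₁ l c₀ k x₁ x₂ ρ₁ ρ₂ s₁ s₂ k₁ k₂ : ℂ)
    (hne : x₁ ≠ x₂)
    (hρ₁ : ρ₁ ^ 2 = -x₁ ^ 4 + 6 * l₁ * x₁ ^ 2 + 4 * l * c₀ * x₁ + c₀ ^ 2 - k ^ 2)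
    (hρ₂ : ρ₂ ^ 2 = -x₂ ^ 4 + 6 * l₁ * x₂ ^ 2 + 4 * l * c₀ * x₂ + c₀ ^ 2 - k ^ 2)
    (Rx R₁ : ℂ)
    (hRx : Rx = -(x₁ ^ 2 * x₂ ^ 2) + 6 * l₁ * x₁ * x₂
        + 2 * l * c₀ * (x₁ + x₂) + c₀ ^ 2 - k ^ 2)
    (hR₁ : R₁ = -(6 * l₁ * x₁ ^ 2 * x₂ ^ 2)
        - (c₀ ^ 2 - k ^ 2) * (x₁ + x₂) ^ 2
        - 4 * l * c₀ * (x₁ + x₂) * x₁ * x₂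
        + 6 * l₁ * (c₀ ^ 2 - k ^ 2) - 4 * l ^ 2 * c₀ ^ 2)
    (hs₁ : s₁ = (Rx - ρ₁ * ρ₂) / (2 * (x₁ - x₂) ^ 2) + l₁ / 2)
    (hs₂ : s₂ = (Rx + ρ₁ * ρ₂) / (2 * (x₁ - x₂) ^ 2) + l₁ / 2)
    (hk₁ : k₁ = (l₁ + k) / 2) (hk₂ : k₂ = (l₁ - k) / 2) :
    s₂ - s₁ = ρ₁ * ρ₂ / (x₁ - x₂) ^ 2 ∧
    (R₁ + k ^ 2 * (x₁ - x₂) ^ 2) ^ 2 - 4 * k ^ 2 * (ρ₁ ^ 2) * (ρ₂ ^ 2)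
      = 16 * (x₁ - x₂) ^ 4 * (s₁ - k₁) * (s₂ - k₁) * (s₁ - k₂) * (s₂ - k₂) := by
  have hD : (x₁ - x₂) ^ 2 ≠ 0 := pow_ne_zero 2 (sub_ne_zero.mpr hne)
  constructor
  · rw [hs₁, hs₂]
    field_simp
    ring
  · have h12 : ρ₁ ^ 2 * ρ₂ ^ 2 =
        (-x₁ ^ 4 + 6 * l₁ * x₁ ^ 2 + 4 * l * c₀ * x₁ + c₀ ^ 2 - k ^ 2) *
        (-x₂ ^ 4 + 6 * l₁ * x₂ ^ 2 + 4 * l * c₀ * x₂ + c₀ ^ 2 - k ^ 2) := by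
      rw [hρ₁, hρ₂]
    have key : ((R₁ + k ^ 2 * (x₁ - x₂) ^ 2) ^ 2 - 4 * k ^ 2 * (ρ₁ ^ 2) * (ρ₂ ^ 2))
        * ((x₁ - x₂) ^ 2) ^ 2 =
        (Rx - ρ₁ * ρ₂ - k * (x₁ - x₂) ^ 2) * (Rx + ρ₁ * ρ₂ - k * (x₁ - x₂) ^ 2) *
        (Rx - ρ₁ * ρ₂ + k * (x₁ - x₂) ^ 2) * (Rx + ρ₁ * ρ₂ + k * (x₁ - x₂) ^ 2) := by
      subst hRx hR₁
      linear_combination (-(ρ₁ ^ 2 * ρ₂ ^ 2)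
        + (-(x₁ ^ 2 * x₂ ^ 2) + 6 * l₁ * x₁ * x₂
        + 2 * l * c₀ * (x₁ + x₂) + c₀ ^ 2 - k ^ 2) ^ 2
        - 2 * k ^ 2 * ((x₁ - x₂) ^ 2) ^ 2
        - (x₁ - x₂) ^ 2 * (-(6 * l₁ * x₁ ^ 2 * x₂ ^ 2)
        - (c₀ ^ 2 - k ^ 2) * (x₁ + x₂) ^ 2
        - 4 * l * c₀ * (x₁ + x₂) * x₁ * x₂
        + 6 * l₁ * (c₀ ^ 2 - k ^ 2) - 4 * l ^ 2 * c₀ ^ 2)) * h12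
    have expand : 16 * (x₁ - x₂) ^ 4 * (s₁ - k₁) * (s₂ - k₁) * (s₁ - k₂) * (s₂ - k₂) =
        ((Rx - ρ₁ * ρ₂ - k * (x₁ - x₂) ^ 2) * (Rx + ρ₁ * ρ₂ - k * (x₁ - x₂) ^ 2) *
        (Rx - ρ₁ * ρ₂ + k * (x₁ - x₂) ^ 2) * (Rx + ρ₁ * ρ₂ + k * (x₁ - x₂) ^ 2))
        / ((x₁ - x₂) ^ 2) ^ 2 := by
      have f1 : s₁ - k₁ = (Rx - ρ₁ * ρ₂ - k * (x₁ - x₂) ^ 2) / (2 * (x₁ - x₂) ^ 2) := by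
        rw [hs₁, hk₁]; field_simp; ring
      have f2 : s₂ - k₁ = (Rx + ρ₁ * ρ₂ - k * (x₁ - x₂) ^ 2) / (2 * (x₁ - x₂) ^ 2) := by
        rw [hs₂, hk₁]; field_simp; ring
      have f3 : s₁ - k₂ = (Rx - ρ₁ * ρ₂ + k * (x₁ - x₂) ^ 2) / (2 * (x₁ - x₂) ^ 2) := by
        rw [hs₁, hk₂]; field_simp; ring
      have f4 : s₂ - k₂ = (Rx + ρ₁ * ρ₂ + k * (x₁ - x₂) ^ 2) / (2 * (x₁ - x₂) ^ 2) := by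
        rw [hs₂, hk₂]; field_simp; ring
      rw [f1, f2, f3, f4,
        show (x₁ - x₂) ^ 4 = ((x₁ - x₂) ^ 2) ^ 2 by ring]
      exact stmt_12_aux _ _ _ _ _ hD
    rw [expand, eq_div_iff (pow_ne_zero 2 hD)]
    exact key
end

section
/- Let $g_2 = k^2 - c_0^2 + 3l_1^2$ and $g_3 = l_1(k^2 - c_0^2 - l_1^2) + l^2c_0^2$. Let $s_1$ be defined from distinct complex numbers $x_1, x_2$ by $s_1 = \frac{R(x_1x_2) - \sqrt{R(x_1)}\sqrt{R(x_2)}}{2(x_1-x_2)^2} + \frac{l_1}{2}$. Then $4s_1^3 - g_2 s_1 - g_3 = \left(\frac{R(x_1) - \tfrac14(x_1-x_2)R'(x_1)}{(x_1-x_2)^3}\sqrt{R(x_2)} - \frac{R(x_2) + \tfrac14(x_1-x_2)R'(x_2)}{(x_1-x_2)^3}\sqrt{R(x_1)}\right)^2$, where $R'$ denotes the derivative of $R$. -/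
set_option maxHeartbeats 1600000

theorem stmt_13 (l₁ l c₀ k x₁ x₂ ρ₁ ρ₂ s₁ g₂ g₃ : ℂ)
    (hne : x₁ ≠ x₂)
    (R : ℂ → ℂ)
    (hR : ∀ x, R x = -x ^ 4 + 6 * l₁ * x ^ 2 + 4 * l * c₀ * x + c₀ ^ 2 - k ^ 2)
    (R' : ℂ → ℂ)
    (hR' : ∀ x, R' x = -(4 * x ^ 3) + 12 * l₁ * x + 4 * l * c₀)
    (hρ₁ : ρ₁ ^ 2 = R x₁) (hρ₂ : ρ₂ ^ 2 = R x₂)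
    (Rx : ℂ)
    (hRx : Rx = -(x₁ ^ 2 * x₂ ^ 2) + 6 * l₁ * x₁ * x₂
        + 2 * l * c₀ * (x₁ + x₂) + c₀ ^ 2 - k ^ 2)
    (hg₂ : g₂ = k ^ 2 - c₀ ^ 2 + 3 * l₁ ^ 2)
    (hg₃ : g₃ = l₁ * (k ^ 2 - c₀ ^ 2 - l₁ ^ 2) + l ^ 2 * c₀ ^ 2)
    (hs₁ : s₁ = (Rx - ρ₁ * ρ₂) / (2 * (x₁ - x₂) ^ 2) + l₁ / 2) :
    4 * s₁ ^ 3 - g₂ * s₁ - g₃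
      = ((R x₁ - (1 / 4) * (x₁ - x₂) * R' x₁) / (x₁ - x₂) ^ 3 * ρ₂
          - (R x₂ + (1 / 4) * (x₁ - x₂) * R' x₂) / (x₁ - x₂) ^ 3 * ρ₁) ^ 2 := by
  have hd : x₁ - x₂ ≠ 0 := sub_ne_zero.mpr hne
  have hd2 : (2 : ℂ) * (x₁ - x₂) ^ 2 ≠ 0 :=
    mul_ne_zero two_ne_zero (pow_ne_zero _ hd)
  have hd6 : ((2 : ℂ) * (x₁ - x₂) ^ 2) ^ 3 ≠ 0 := pow_ne_zero _ hd2
  obtain ⟨p, hp⟩ : ∃ p : ℂ, p = Rx / (2 * (x₁ - x₂) ^ 2) + l₁ / 2 := ⟨_, rfl⟩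
  obtain ⟨q, hq⟩ : ∃ q : ℂ, q = -(1 / (2 * (x₁ - x₂) ^ 2)) := ⟨_, rfl⟩
  obtain ⟨a, ha⟩ : ∃ a : ℂ,
      a = (R x₁ - (1 / 4) * (x₁ - x₂) * R' x₁) / (x₁ - x₂) ^ 3 := ⟨_, rfl⟩
  obtain ⟨b, hb⟩ : ∃ b : ℂ,
      b = (R x₂ + (1 / 4) * (x₁ - x₂) * R' x₂) / (x₁ - x₂) ^ 3 := ⟨_, rfl⟩
  have hs : s₁ = p + q * (ρ₁ * ρ₂) := by rw [hs₁, hp, hq]; ring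
  -- scaled (denominator-free) versions of the defining equations
  have hp' : p * (2 * (x₁ - x₂) ^ 2) = Rx + l₁ * (x₁ - x₂) ^ 2 := by
    rw [hp]; field_simp
  have hq' : q * (2 * (x₁ - x₂) ^ 2) = -1 := by
    rw [hq]; field_simp
  have ha' : a * (x₁ - x₂) ^ 3 = R x₁ - (1 / 4) * (x₁ - x₂) * R' x₁ := by
    rw [ha]; field_simp
  have hb' : b * (x₁ - x₂) ^ 3 = R x₂ + (1 / 4) * (x₁ - x₂) * R' x₂ := by
    rw [hb]; field_simp
  have H1 : (4 * q ^ 3 * R x₁ * R x₂ + 12 * p ^ 2 * q - g₂ * q + 2 * a * b)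
      * (2 * (x₁ - x₂) ^ 2) ^ 3 = 0 := by
    have e : 4 * (q * (2 * (x₁ - x₂) ^ 2)) ^ 3 * R x₁ * R x₂
        + 12 * (p * (2 * (x₁ - x₂) ^ 2)) ^ 2 * (q * (2 * (x₁ - x₂) ^ 2))
        - g₂ * (q * (2 * (x₁ - x₂) ^ 2)) * (2 * (x₁ - x₂) ^ 2) ^ 2
        + 16 * (a * (x₁ - x₂) ^ 3) * (b * (x₁ - x₂) ^ 3) = 0 := by
      rw [hp', hq', ha', hb', hR x₁, hR x₂, hR' x₁, hR' x₂, hRx, hg₂]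
      ring
    linear_combination e
  have H2 : (12 * p * q ^ 2 * R x₁ * R x₂ + 4 * p ^ 3 - g₂ * p - g₃
      - a ^ 2 * R x₂ - b ^ 2 * R x₁) * (2 * (x₁ - x₂) ^ 2) ^ 3 = 0 := by
    have e : 12 * (p * (2 * (x₁ - x₂) ^ 2)) * (q * (2 * (x₁ - x₂) ^ 2)) ^ 2
          * R x₁ * R x₂
        + 4 * (p * (2 * (x₁ - x₂) ^ 2)) ^ 3
        - g₂ * (p * (2 * (x₁ - x₂) ^ 2)) * (2 * (x₁ - x₂) ^ 2) ^ 2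
        - g₃ * (2 * (x₁ - x₂) ^ 2) ^ 3
        - 8 * (a * (x₁ - x₂) ^ 3) ^ 2 * R x₂
        - 8 * (b * (x₁ - x₂) ^ 3) ^ 2 * R x₁ = 0 := by
      rw [hp', hq', ha', hb', hR x₁, hR x₂, hR' x₁, hR' x₂, hRx, hg₂, hg₃]
      ring
    linear_combination e
  have h1 : 4 * q ^ 3 * R x₁ * R x₂ + 12 * p ^ 2 * q - g₂ * q + 2 * a * b = 0 :=
    (mul_eq_zero.mp H1).resolve_right hd6
  have h2 : 12 * p * q ^ 2 * R x₁ * R x₂ + 4 * p ^ 3 - g₂ * p - g₃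
      - a ^ 2 * R x₂ - b ^ 2 * R x₁ = 0 :=
    (mul_eq_zero.mp H2).resolve_right hd6
  rw [hs, ← ha, ← hb]
  linear_combination (ρ₁ * ρ₂) * h1 + h2
    + (4 * q ^ 3 * ρ₁ * ρ₂ * ρ₂ ^ 2 + 12 * p * q ^ 2 * ρ₂ ^ 2 - b ^ 2) * hρ₁
    + (4 * q ^ 3 * ρ₁ * ρ₂ * R x₁ + 12 * p * q ^ 2 * R x₁ - a ^ 2) * hρ₂
end

section
/- Suppose $l_1 < 0$ and $k_0 > 0$. Then for every real value of $l_0$, the quantity $G = (-k_0+3l_1^2)^3 - 27(-l_1(k_0+l_1^2)+l_0^2)^2$ is negative; hence the quartic $R(x) = -x^4 + 6l_1x^2 + 4l_0x + k_0$ has exactly two real roots and two (nonreal) complex conjugate roots. -/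
/-!
With `u = -l₁ > 0` one has `g₃ ≥ u (k₀ + u²) > 0`, and
`g₂³ - 27 (u (k₀ + u²))² = -(81 u⁴ k₀ + 18 u² k₀² + k₀³) < 0`, whence `G < 0`.

For the roots, `-R(x) = x⁴ + p x² + q x + r` with `p = -6 l₁ > 0` and `r = -k₀ < 0`.
A positive root `α²` of the resolvent cubic factors it over `ℝ` as
`(x² + α x + β) (x² - α x + γ)`, and the product of the discriminants of the two factors is
`-3 α⁴ - 4 p α² + 16 r < 0`: one factor has two distinct real roots, the other a pair of
conjugate nonreal ones.
-/

open ComplexConjugate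

lemma quartic_invariant_neg (l₁ k₀ : ℝ) (hl₁ : l₁ < 0) (hk₀ : 0 < k₀) (l₀ : ℝ) :
    (-k₀ + 3 * l₁ ^ 2) ^ 3 - 27 * (-(l₁ * (k₀ + l₁ ^ 2)) + l₀ ^ 2) ^ 2 < 0 := by
  have hc : 0 < -(l₁ * (k₀ + l₁ ^ 2)) := by nlinarith
  calc (-k₀ + 3 * l₁ ^ 2) ^ 3 - 27 * (-(l₁ * (k₀ + l₁ ^ 2)) + l₀ ^ 2) ^ 2
      ≤ (-k₀ + 3 * l₁ ^ 2) ^ 3 - 27 * (-(l₁ * (k₀ + l₁ ^ 2))) ^ 2 := by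
        gcongr
        exact le_add_of_nonneg_right (sq_nonneg l₀)
    _ = -(81 * l₁ ^ 4 * k₀ + 18 * l₁ ^ 2 * k₀ ^ 2 + k₀ ^ 3) := by ring
    _ < 0 := neg_lt_zero.mpr (by positivity)

/-- The relations `x⁴ + p x² + q x + r = (x² + α x + β) (x² - α x + γ)`, coefficientwise. -/
lemma exists_depressed_quartic_factorization (p q r : ℝ) (hp : 0 ≤ p) (hr : r < 0) :
    ∃ α β γ : ℝ, β + γ = p + α ^ 2 ∧ α * (γ - β) = q ∧ β * γ = r := by
  have hdisc : 0 < p ^ 2 - 4 * r := by nlinarith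
  rcases eq_or_ne q 0 with rfl | hq
  · have hs := Real.sq_sqrt hdisc.le
    refine ⟨0, (p - √(p ^ 2 - 4 * r)) / 2, (p + √(p ^ 2 - 4 * r)) / 2, by ring, by ring, ?_⟩
    linear_combination (-1 / 4 : ℝ) * hs
  · -- `α² = y` must be a root of the resolvent cubic `f`; `f 0 = -q² < 0` gives a positive one.
    set f : ℝ → ℝ := fun y => y ^ 3 + 2 * p * y ^ 2 + (p ^ 2 - 4 * r) * y - q ^ 2 with hf
    set Y : ℝ := q ^ 2 / (p ^ 2 - 4 * r) + 1
    have hY : 0 < Y := by positivity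
    have hfY : 0 < f Y := by
      have hlin : (p ^ 2 - 4 * r) * Y - q ^ 2 = p ^ 2 - 4 * r := by
        simp only [Y]; field_simp; ring
      have : 0 ≤ Y ^ 3 + 2 * p * Y ^ 2 := by positivity
      simp only [hf]
      linarith
    have hf0 : f 0 < 0 := by simpa [hf] using pow_pos (abs_pos.mpr hq) 2
    obtain ⟨y, ⟨hy0, -⟩, hfy⟩ :=
      intermediate_value_Ioo hY.le (by fun_prop : Continuous f).continuousOn ⟨hf0, hfY⟩
    have hα : √y ^ 2 = y := Real.sq_sqrt hy0.le
    have hα0 : √y ≠ 0 := (Real.sqrt_pos.mpr hy0).ne'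
    refine ⟨√y, (p + y) / 2 - q / (2 * √y), (p + y) / 2 + q / (2 * √y), ?_, ?_, ?_⟩
    · rw [hα]; ring
    · field_simp; ring
    · field_simp
      rw [← hα] at hfy
      linear_combination hfy + (-2 * p * √y ^ 2 - √y ^ 2 * (y + √y ^ 2)) * hα

lemma exists_depressed_quartic_factorization_discrim (p q r : ℝ) (hp : 0 ≤ p) (hr : r < 0) :
    ∃ a b c d : ℝ, 0 < a ^ 2 - 4 * b ∧ c ^ 2 - 4 * d < 0 ∧
      ∀ x : ℂ, x ^ 4 + p * x ^ 2 + q * x + r = (x ^ 2 + a * x + b) * (x ^ 2 + c * x + d) := by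
  obtain ⟨α, β, γ, hsum, hdiff, hprod⟩ := exists_depressed_quartic_factorization p q r hp hr
  have hfactor : ∀ x : ℂ,
      x ^ 4 + p * x ^ 2 + q * x + r = (x ^ 2 + α * x + β) * (x ^ 2 + (-α : ℝ) * x + γ) := by
    intro x
    push_cast
    have hsum : (β + γ : ℂ) = p + α ^ 2 := by exact_mod_cast hsum
    have hdiff : (α * (γ - β) : ℂ) = q := by exact_mod_cast hdiff
    have hprod : (β * γ : ℂ) = r := by exact_mod_cast hprod
    linear_combination (-x ^ 2) * hsum - x * hdiff - hprod
  have hdiscs : (α ^ 2 - 4 * β) * ((-α) ^ 2 - 4 * γ) < 0 := by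
    have : (α ^ 2 - 4 * β) * ((-α) ^ 2 - 4 * γ) = -3 * α ^ 4 - 4 * p * α ^ 2 + 16 * r := by
      linear_combination (-4 * α ^ 2) * hsum + 16 * hprod
    nlinarith [pow_nonneg (sq_nonneg α) 2, mul_nonneg hp (sq_nonneg α)]
  rcases lt_or_ge 0 (α ^ 2 - 4 * β) with hβ | hβ
  · exact ⟨α, β, -α, γ, hβ, neg_of_mul_neg_right hdiscs hβ.le, hfactor⟩
  · refine ⟨-α, γ, α, β, by nlinarith, ?_, fun x => (hfactor x).trans (mul_comm _ _)⟩
    exact lt_of_le_of_ne hβ (by rintro h; simp [h] at hdiscs)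

lemma exists_real_roots_of_discrim_pos (a b : ℝ) (h : 0 < a ^ 2 - 4 * b) :
    ∃ x₁ x₂ : ℝ, x₁ ≠ x₂ ∧ ∀ w : ℂ, w ^ 2 + a * w + b = (w - x₁) * (w - x₂) := by
  have hs := Real.sq_sqrt h.le
  refine ⟨(-a + √(a ^ 2 - 4 * b)) / 2, (-a - √(a ^ 2 - 4 * b)) / 2, ?_, fun w => ?_⟩
  · have := Real.sqrt_pos.mpr h
    intro h'
    linarith
  · have hs : ((√(a ^ 2 - 4 * b) : ℝ) : ℂ) ^ 2 = a ^ 2 - 4 * b := by exact_mod_cast hs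
    push_cast
    linear_combination (1 / 4 : ℂ) * hs

lemma exists_nonreal_roots_of_discrim_neg (a b : ℝ) (h : a ^ 2 - 4 * b < 0) :
    ∃ z : ℂ, z.im ≠ 0 ∧ ∀ w : ℂ, w ^ 2 + a * w + b = (w - z) * (w - conj z) := by
  have hs := Real.sq_sqrt (neg_nonneg.mpr h.le)
  refine ⟨⟨-a / 2, √(-(a ^ 2 - 4 * b)) / 2⟩, (div_pos (Real.sqrt_pos.mpr (by linarith)) two_pos).ne',
    fun w => ?_⟩
  set z : ℂ := ⟨-a / 2, √(-(a ^ 2 - 4 * b)) / 2⟩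
  have hre : z + conj z = -a := by rw [Complex.add_conj]; push_cast [z]; ring
  have hnorm : z * conj z = b := by
    rw [Complex.mul_conj, Complex.normSq_mk]
    norm_cast
    linear_combination (1 / 4 : ℝ) * hs
  linear_combination w * hre - hnorm

theorem stmt_17 (l₁ k₀ : ℝ) (hl₁ : l₁ < 0) (hk₀ : 0 < k₀) (l₀ : ℝ) :
    (-k₀ + 3 * l₁ ^ 2) ^ 3 - 27 * (-(l₁ * (k₀ + l₁ ^ 2)) + l₀ ^ 2) ^ 2 < 0 ∧
    ∃ (x₁ x₂ : ℝ) (z : ℂ), x₁ ≠ x₂ ∧ z.im ≠ 0 ∧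
      ∀ w : ℂ, -w ^ 4 + 6 * (l₁ : ℂ) * w ^ 2 + 4 * (l₀ : ℂ) * w + (k₀ : ℂ) = 0
        ↔ w = (x₁ : ℂ) ∨ w = (x₂ : ℂ) ∨ w = z ∨ w = (starRingEnd ℂ) z := by
  refine ⟨quartic_invariant_neg l₁ k₀ hl₁ hk₀ l₀, ?_⟩
  obtain ⟨a, b, c, d, hab, hcd, hfactor⟩ :=
    exists_depressed_quartic_factorization_discrim (-6 * l₁) (-4 * l₀) (-k₀)
      (by linarith) (by linarith)
  obtain ⟨x₁, x₂, hx, hreal⟩ := exists_real_roots_of_discrim_pos a b hab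
  obtain ⟨z, hz, hnonreal⟩ := exists_nonreal_roots_of_discrim_neg c d hcd
  refine ⟨x₁, x₂, z, hx, hz, fun w => ?_⟩
  have hR : -w ^ 4 + 6 * (l₁ : ℂ) * w ^ 2 + 4 * (l₀ : ℂ) * w + (k₀ : ℂ) =
      -((w - x₁) * (w - x₂) * ((w - z) * (w - conj z))) := by
    rw [← hreal, ← hnonreal, ← hfactor]
    push_cast
    ring
  rw [hR, neg_eq_zero]
  simp only [mul_eq_zero, sub_eq_zero, or_assoc]
end
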